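/- Let 1 < p ≤ 2 ≤ q < ∞ with p ≤ q and let B be a Banach space. Then there is a constant c = c(p,q), independent of m and B, such that for every m ≥ 1, a_{m,p}(ℓ_q(B)) ≤ c·a_{m,p}(B), where a_{m,p} denotes the m-th type-p constant. -/

import Mathlib

open Finset

lemma two_point (l a b c : ℝ) (h : |a - b| ≤ c) :
    Real.exp (l * a) + Real.exp (l * b) ≤
      2 * Real.exp (l * ((a + b) / 2) + l ^ 2 * c ^ 2 / 8) := by
  have h1 : Real.exp (l * a) + Real.exp (l * b)
      = 2 * Real.exp (l * ((a + b) / 2)) * Real.cosh (l * ((a - b) / 2)) := by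
    rw [Real.cosh_eq]
    rw [show 2 * Real.exp (l * ((a + b) / 2)) *
        ((Real.exp (l * ((a - b) / 2)) + Real.exp (-(l * ((a - b) / 2)))) / 2)
      = Real.exp (l * ((a + b) / 2)) * Real.exp (l * ((a - b) / 2))
        + Real.exp (l * ((a + b) / 2)) * Real.exp (-(l * ((a - b) / 2))) by ring,
      ← Real.exp_add, ← Real.exp_add]
    ring_nf
  rw [h1]
  have h2 : Real.cosh (l * ((a - b) / 2)) ≤ Real.exp (l ^ 2 * c ^ 2 / 8) := by
    refine (Real.cosh_le_exp_half_sq _).trans (Real.exp_le_exp.2 ?_)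
    have habs : (a - b) ^ 2 ≤ c ^ 2 := by
      rw [← sq_abs (a - b)]
      exact pow_le_pow_left₀ (abs_nonneg _) h 2
    have : (l * ((a - b) / 2)) ^ 2 = l ^ 2 * (a - b) ^ 2 / 4 := by ring
    rw [this]
    nlinarith [sq_nonneg l]
  calc 2 * Real.exp (l * ((a + b) / 2)) * Real.cosh (l * ((a - b) / 2))
      ≤ 2 * Real.exp (l * ((a + b) / 2)) * Real.exp (l ^ 2 * c ^ 2 / 8) := by
        have := Real.exp_pos (l * ((a + b) / 2)); nlinarith [Real.cosh_pos (l * ((a-b)/2))]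
    _ = 2 * Real.exp (l * ((a + b) / 2) + l ^ 2 * c ^ 2 / 8) := by
        rw [mul_assoc, ← Real.exp_add]

lemma mcdiarmid (m : ℕ) (c : Fin m → ℝ) (f : (Fin m → Bool) → ℝ) (l : ℝ)
    (hf : ∀ (j : Fin m) (ε : Fin m → Bool),
      |f (Function.update ε j true) - f (Function.update ε j false)| ≤ c j) :
    ∑ ε : Fin m → Bool, Real.exp (l * f ε) ≤
      2 ^ m * Real.exp (l * ((∑ ε : Fin m → Bool, f ε) / 2 ^ m)
        + l ^ 2 * (∑ j, (c j) ^ 2) / 8) := by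
  induction m with
  | zero =>
      simp
  | succ m ih =>
      have key : ∀ F : (Fin (m + 1) → Bool) → ℝ,
          ∑ ε : Fin (m + 1) → Bool, F ε
            = ∑ ε' : Fin m → Bool, (F (Fin.cons true ε') + F (Fin.cons false ε')) := by
        intro F
        rw [← (Fin.consEquiv (fun _ : Fin (m + 1) => Bool)).sum_comp F]
        have hFe : ∀ i : Bool × (Fin m → Bool),
            F ((Fin.consEquiv (fun _ : Fin (m + 1) => Bool)) i) = F (Fin.cons i.1 i.2) :=
          fun _ => rfl
        rw [Fintype.sum_congr _ _ hFe,
          Fintype.sum_prod_type (f := fun i : Bool × (Fin m → Bool) => F (Fin.cons i.1 i.2))]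
        rw [Fintype.sum_bool]
        rw [← Finset.sum_add_distrib]
      set g : (Fin m → Bool) → ℝ :=
        fun ε' => (f (Fin.cons true ε') + f (Fin.cons false ε')) / 2 with hg
      have hdiff : ∀ ε' : Fin m → Bool,
          |f (Fin.cons true ε') - f (Fin.cons false ε')| ≤ c 0 := by
        intro ε'
        have := hf 0 (Fin.cons true ε')
        rwa [Fin.update_cons_zero, Fin.update_cons_zero] at this
      have hg' : ∀ (j : Fin m) (ε' : Fin m → Bool),
          |g (Function.update ε' j true) - g (Function.update ε' j false)| ≤ c j.succ := by
        intro j ε'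
        have h1 := hf j.succ (Fin.cons true ε')
        have h2 := hf j.succ (Fin.cons false ε')
        rw [← Fin.cons_update, ← Fin.cons_update] at h1 h2
        simp only [hg]
        have : (f (Fin.cons true (Function.update ε' j true))
              + f (Fin.cons false (Function.update ε' j true))) / 2
            - (f (Fin.cons true (Function.update ε' j false))
              + f (Fin.cons false (Function.update ε' j false))) / 2
            = ((f (Fin.cons true (Function.update ε' j true))
                - f (Fin.cons true (Function.update ε' j false)))
              + (f (Fin.cons false (Function.update ε' j true))
                - f (Fin.cons false (Function.update ε' j false)))) / 2 := by ring
        rw [this, abs_div, abs_two]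
        have h3 := (abs_add_le (f (Fin.cons true (Function.update ε' j true))
                - f (Fin.cons true (Function.update ε' j false)))
              (f (Fin.cons false (Function.update ε' j true))
                - f (Fin.cons false (Function.update ε' j false)))).trans
            (add_le_add h1 h2)
        linarith
      have step1 : ∑ ε : Fin (m + 1) → Bool, Real.exp (l * f ε)
          ≤ 2 * Real.exp (l ^ 2 * (c 0) ^ 2 / 8) * ∑ ε' : Fin m → Bool, Real.exp (l * g ε') := by
        rw [key (fun ε => Real.exp (l * f ε)), Finset.mul_sum]
        refine Finset.sum_le_sum fun ε' _ => ?_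
        have := two_point l (f (Fin.cons true ε')) (f (Fin.cons false ε')) (c 0) (hdiff ε')
        calc Real.exp (l * f (Fin.cons true ε')) + Real.exp (l * f (Fin.cons false ε'))
            ≤ 2 * Real.exp (l * ((f (Fin.cons true ε') + f (Fin.cons false ε')) / 2)
                + l ^ 2 * (c 0) ^ 2 / 8) := this
          _ = 2 * Real.exp (l ^ 2 * (c 0) ^ 2 / 8) * Real.exp (l * g ε') := by
              rw [mul_assoc, ← Real.exp_add]; simp only [hg]; ring_nf
      have step2 := ih (fun j => c j.succ) g hg'
      have havg : (∑ ε' : Fin m → Bool, g ε') / 2 ^ m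
          = (∑ ε : Fin (m + 1) → Bool, f ε) / 2 ^ (m + 1) := by
        rw [key f]
        simp only [hg]
        rw [← Finset.sum_div]
        ring
      calc ∑ ε : Fin (m + 1) → Bool, Real.exp (l * f ε)
          ≤ 2 * Real.exp (l ^ 2 * (c 0) ^ 2 / 8) * ∑ ε' : Fin m → Bool, Real.exp (l * g ε') :=
            step1
        _ ≤ 2 * Real.exp (l ^ 2 * (c 0) ^ 2 / 8) *
            (2 ^ m * Real.exp (l * ((∑ ε' : Fin m → Bool, g ε') / 2 ^ m)
              + l ^ 2 * (∑ j : Fin m, (c j.succ) ^ 2) / 8)) := by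
            gcongr
        _ = 2 ^ (m + 1) * Real.exp (l * ((∑ ε : Fin (m + 1) → Bool, f ε) / 2 ^ (m + 1))
            + l ^ 2 * (∑ j : Fin (m + 1), (c j) ^ 2) / 8) := by
            rw [Fin.sum_univ_succ (fun j => (c j) ^ 2), havg]
            have he : l * ((∑ ε : Fin (m + 1) → Bool, f ε) / 2 ^ (m + 1))
                  + l ^ 2 * (c 0 ^ 2 + ∑ i : Fin m, c i.succ ^ 2) / 8
                = l ^ 2 * c 0 ^ 2 / 8 + (l * ((∑ ε : Fin (m + 1) → Bool, f ε) / 2 ^ (m + 1))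
                  + l ^ 2 * (∑ i : Fin m, c i.succ ^ 2) / 8) := by ring
            rw [he]
            simp only [Real.exp_add]
            ring

lemma rpow_le_exp_aux (q : ℝ) (hq : 0 < q) (x : ℝ) (hx : 0 ≤ x) :
    x ^ q ≤ (q / Real.exp 1) ^ q * Real.exp x := by
  rcases eq_or_lt_of_le hx with h | h
  · rw [← h, Real.zero_rpow hq.ne']
    positivity
  · have hqe : (0:ℝ) < q / Real.exp 1 := by positivity
    rw [Real.rpow_def_of_pos h, Real.rpow_def_of_pos hqe, ← Real.exp_add]
    rw [Real.exp_le_exp]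
    rw [Real.log_div hq.ne' (Real.exp_pos 1).ne', Real.log_exp]
    have key : Real.log (x / q) ≤ x / q - 1 :=
      Real.log_le_sub_one_of_pos (by positivity)
    rw [Real.log_div h.ne' hq.ne'] at key
    have h2 : Real.log x ≤ Real.log q + x / q - 1 := by linarith
    calc Real.log x * q ≤ (Real.log q + x / q - 1) * q :=
          mul_le_mul_of_nonneg_right h2 hq.le
      _ = (Real.log q - 1) * q + x := by field_simp; ring

lemma moment_bound (m : ℕ) (c : Fin m → ℝ) (f : (Fin m → Bool) → ℝ) (q s : ℝ)
    (hq : 1 ≤ q) (hs : 0 < s) (hcs : ∑ j, (c j) ^ 2 ≤ s)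
    (hf : ∀ (j : Fin m) (ε : Fin m → Bool),
      |f (Function.update ε j true) - f (Function.update ε j false)| ≤ c j) :
    (∑ ε : Fin m → Bool, |f ε - (∑ ε' : Fin m → Bool, f ε') / 2 ^ m| ^ q) / 2 ^ m
      ≤ 2 * Real.exp (1/8) * (q / Real.exp 1) ^ q * s ^ (q / 2) := by
  have hq0 : (0:ℝ) < q := lt_of_lt_of_le one_pos hq
  set μ : ℝ := (∑ ε' : Fin m → Bool, f ε') / 2 ^ m with hμ
  set l : ℝ := 1 / Real.sqrt s with hl
  have hsqrt : (0:ℝ) < Real.sqrt s := Real.sqrt_pos.2 hs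
  have hl0 : 0 < l := by positivity
  have hl2 : l ^ 2 = 1 / s := by
    rw [hl, div_pow, one_pow, Real.sq_sqrt hs.le]
  have hexp : l ^ 2 * (∑ j, (c j) ^ 2) / 8 ≤ 1/8 := by
    rw [hl2]
    have h1 : 1 / s * (∑ j, (c j) ^ 2) ≤ 1 := by
      rw [div_mul_eq_mul_div, one_mul, div_le_one hs]; exact hcs
    linarith
  have hmgf1 : ∑ ε : Fin m → Bool, Real.exp (l * (f ε - μ)) ≤ 2 ^ m * Real.exp (1/8) := by
    calc ∑ ε : Fin m → Bool, Real.exp (l * (f ε - μ))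
        = Real.exp (-(l * μ)) * ∑ ε : Fin m → Bool, Real.exp (l * f ε) := by
          rw [Finset.mul_sum]
          refine Finset.sum_congr rfl fun ε _ => ?_
          rw [← Real.exp_add]; ring_nf
      _ ≤ Real.exp (-(l * μ)) * (2 ^ m * Real.exp (l * μ + l ^ 2 * (∑ j, (c j) ^ 2) / 8)) := by
          gcongr
          exact mcdiarmid m c f l hf
      _ = 2 ^ m * Real.exp (l ^ 2 * (∑ j, (c j) ^ 2) / 8) := by
          rw [show Real.exp (-(l * μ)) * (2 ^ m * Real.exp (l * μ + l ^ 2 * (∑ j, (c j) ^ 2) / 8))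
              = 2 ^ m * (Real.exp (-(l * μ)) * Real.exp (l * μ + l ^ 2 * (∑ j, (c j) ^ 2) / 8))
              from by ring, ← Real.exp_add,
            show -(l * μ) + (l * μ + l ^ 2 * (∑ j, (c j) ^ 2) / 8)
              = l ^ 2 * (∑ j, (c j) ^ 2) / 8 from by ring]
      _ ≤ 2 ^ m * Real.exp (1/8) :=
          mul_le_mul_of_nonneg_left (Real.exp_le_exp.2 hexp) (by positivity)
  have hmgf2 : ∑ ε : Fin m → Bool, Real.exp (l * (μ - f ε)) ≤ 2 ^ m * Real.exp (1/8) := by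
    have hf' : ∀ (j : Fin m) (ε : Fin m → Bool),
        |(fun ε => -f ε) (Function.update ε j true)
          - (fun ε => -f ε) (Function.update ε j false)| ≤ c j := by
      intro j ε
      simpa [neg_add_eq_sub, abs_sub_comm] using hf j ε
    have hsum : (∑ ε : Fin m → Bool, (fun ε => -f ε) ε) = -∑ ε : Fin m → Bool, f ε := by
      simp
    calc ∑ ε : Fin m → Bool, Real.exp (l * (μ - f ε))
        = Real.exp (l * μ) * ∑ ε : Fin m → Bool, Real.exp (l * (-f ε)) := by
          rw [Finset.mul_sum]
          refine Finset.sum_congr rfl fun ε _ => ?_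
          rw [← Real.exp_add]; ring_nf
      _ ≤ Real.exp (l * μ) * (2 ^ m * Real.exp (l * ((-∑ ε : Fin m → Bool, f ε) / 2 ^ m)
            + l ^ 2 * (∑ j, (c j) ^ 2) / 8)) := by
          gcongr
          have := mcdiarmid m c (fun ε => -f ε) l hf'
          rwa [hsum] at this
      _ = 2 ^ m * Real.exp (l ^ 2 * (∑ j, (c j) ^ 2) / 8) := by
          rw [show Real.exp (l * μ) * (2 ^ m * Real.exp (l * ((-∑ ε : Fin m → Bool, f ε) / 2 ^ m)
                + l ^ 2 * (∑ j, (c j) ^ 2) / 8))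
              = 2 ^ m * (Real.exp (l * μ) * Real.exp (l * ((-∑ ε : Fin m → Bool, f ε) / 2 ^ m)
                + l ^ 2 * (∑ j, (c j) ^ 2) / 8)) from by ring, ← Real.exp_add]
          congr 1
          rw [hμ]
          ring_nf
      _ ≤ 2 ^ m * Real.exp (1/8) :=
          mul_le_mul_of_nonneg_left (Real.exp_le_exp.2 hexp) (by positivity)
  have pointwise : ∀ ε : Fin m → Bool, l ^ q * |f ε - μ| ^ q
      ≤ (q / Real.exp 1) ^ q * (Real.exp (l * (f ε - μ)) + Real.exp (l * (μ - f ε))) := by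
    intro ε
    have h1 : l ^ q * |f ε - μ| ^ q = (l * |f ε - μ|) ^ q :=
      (Real.mul_rpow hl0.le (abs_nonneg _)).symm
    have h2 : (l * |f ε - μ|) ^ q ≤ (q / Real.exp 1) ^ q * Real.exp (l * |f ε - μ|) :=
      rpow_le_exp_aux q hq0 _ (by positivity)
    have h3 : Real.exp (l * |f ε - μ|)
        ≤ Real.exp (l * (f ε - μ)) + Real.exp (l * (μ - f ε)) := by
      rcases abs_cases (f ε - μ) with ⟨ha, _⟩ | ⟨ha, _⟩
      · rw [ha]
        have := (Real.exp_pos (l * (μ - f ε))).le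
        linarith
      · rw [ha, show l * -(f ε - μ) = l * (μ - f ε) from by ring]
        have := (Real.exp_pos (l * (f ε - μ))).le
        linarith
    calc l ^ q * |f ε - μ| ^ q = (l * |f ε - μ|) ^ q := h1
      _ ≤ (q / Real.exp 1) ^ q * Real.exp (l * |f ε - μ|) := h2
      _ ≤ (q / Real.exp 1) ^ q * (Real.exp (l * (f ε - μ)) + Real.exp (l * (μ - f ε))) := by
          have : (0:ℝ) ≤ (q / Real.exp 1) ^ q := Real.rpow_nonneg (by positivity) q
          nlinarith
  have key : l ^ q * (∑ ε : Fin m → Bool, |f ε - μ| ^ q)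
      ≤ (q / Real.exp 1) ^ q * (2 ^ m * Real.exp (1/8) + 2 ^ m * Real.exp (1/8)) := by
    rw [Finset.mul_sum]
    calc ∑ ε : Fin m → Bool, l ^ q * |f ε - μ| ^ q
        ≤ ∑ ε : Fin m → Bool, (q / Real.exp 1) ^ q
            * (Real.exp (l * (f ε - μ)) + Real.exp (l * (μ - f ε))) :=
          Finset.sum_le_sum fun ε _ => pointwise ε
      _ = (q / Real.exp 1) ^ q * ((∑ ε : Fin m → Bool, Real.exp (l * (f ε - μ)))
            + ∑ ε : Fin m → Bool, Real.exp (l * (μ - f ε))) := by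
          rw [← Finset.mul_sum, Finset.sum_add_distrib]
      _ ≤ (q / Real.exp 1) ^ q * (2 ^ m * Real.exp (1/8) + 2 ^ m * Real.exp (1/8)) := by
          have : (0:ℝ) ≤ (q / Real.exp 1) ^ q := Real.rpow_nonneg (by positivity) q
          nlinarith
  have hlq : l ^ q * s ^ (q / 2) = 1 := by
    have h1 : (Real.sqrt s) ^ q = s ^ (q / 2) := by
      rw [Real.sqrt_eq_rpow, ← Real.rpow_mul hs.le]
      congr 1
      ring
    rw [← h1, ← Real.mul_rpow hl0.le hsqrt.le, hl, one_div_mul_cancel hsqrt.ne',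
      Real.one_rpow]
  have hP : (0:ℝ) ≤ s ^ (q / 2) := Real.rpow_nonneg hs.le _
  have h2m : (0:ℝ) < 2 ^ m := by positivity
  calc (∑ ε : Fin m → Bool, |f ε - μ| ^ q) / 2 ^ m
      = (l ^ q * (∑ ε : Fin m → Bool, |f ε - μ| ^ q)) * s ^ (q / 2) / 2 ^ m := by
        rw [show (l ^ q * (∑ ε : Fin m → Bool, |f ε - μ| ^ q)) * s ^ (q / 2)
            = (∑ ε : Fin m → Bool, |f ε - μ| ^ q) * (l ^ q * s ^ (q / 2)) from by ring,
          hlq, mul_one]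
    _ ≤ ((q / Real.exp 1) ^ q * (2 ^ m * Real.exp (1/8) + 2 ^ m * Real.exp (1/8)))
          * s ^ (q / 2) / 2 ^ m := by
        gcongr
    _ = 2 * Real.exp (1/8) * (q / Real.exp 1) ^ q * s ^ (q / 2) := by
        field_simp
        ring

lemma sum_rpow_anti {ι : Type*} [Fintype ι] (a : ι → ℝ) (ha : ∀ i, 0 ≤ a i)
    {p r : ℝ} (hp : 0 < p) (hpr : p ≤ r) :
    (∑ i, a i ^ r) ^ (1 / r) ≤ (∑ i, a i ^ p) ^ (1 / p) := by
  have hr : 0 < r := lt_of_lt_of_le hp hpr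
  set T : ℝ := (∑ i, a i ^ p) ^ (1 / p) with hT
  have hsum_nonneg : 0 ≤ ∑ i, a i ^ p :=
    Finset.sum_nonneg fun i _ => Real.rpow_nonneg (ha i) p
  have hT0 : 0 ≤ T := Real.rpow_nonneg hsum_nonneg _
  have hTp : T ^ p = ∑ i, a i ^ p := by
    rw [hT, ← Real.rpow_mul hsum_nonneg]
    rw [one_div_mul_cancel hp.ne', Real.rpow_one]
  have hai : ∀ i, a i ≤ T := by
    intro i
    have h1 : a i ^ p ≤ ∑ i, a i ^ p :=
      Finset.single_le_sum (fun i _ => Real.rpow_nonneg (ha i) p) (Finset.mem_univ i)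
    have h2 := Real.rpow_le_rpow (Real.rpow_nonneg (ha i) p) h1 (by positivity : (0:ℝ) ≤ 1/p)
    rwa [← Real.rpow_mul (ha i), mul_one_div, div_self hp.ne', Real.rpow_one] at h2
  have hkey : ∑ i, a i ^ r ≤ T ^ r := by
    calc ∑ i, a i ^ r = ∑ i, a i ^ p * a i ^ (r - p) := by
          refine Finset.sum_congr rfl fun i _ => ?_
          rw [← Real.rpow_add' (ha i)]
          · ring_nf
          · ring_nf; positivity
      _ ≤ ∑ i, a i ^ p * T ^ (r - p) := by
          refine Finset.sum_le_sum fun i _ => ?_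
          have := Real.rpow_le_rpow (ha i) (hai i) (by linarith : (0:ℝ) ≤ r - p)
          exact mul_le_mul_of_nonneg_left this (Real.rpow_nonneg (ha i) p)
      _ = T ^ p * T ^ (r - p) := by rw [← Finset.sum_mul, hTp]
      _ = T ^ r := by
          rw [← Real.rpow_add' hT0]
          · ring_nf
          · ring_nf; positivity
  calc (∑ i, a i ^ r) ^ (1 / r)
      ≤ (T ^ r) ^ (1 / r) := by
        apply Real.rpow_le_rpow _ hkey (by positivity)
        exact Finset.sum_nonneg fun i _ => Real.rpow_nonneg (ha i) r
    _ = T := by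
        rw [← Real.rpow_mul hT0, mul_one_div, div_self hr.ne', Real.rpow_one]

lemma add_rpow_le (x y q : ℝ) (hx : 0 ≤ x) (hy : 0 ≤ y) (hq : 0 ≤ q) :
    (x + y) ^ q ≤ 2 ^ q * (x ^ q + y ^ q) := by
  have h1 : x + y ≤ 2 * max x y := by
    rcases max_cases x y with ⟨h, h'⟩ | ⟨h, h'⟩ <;> rw [h] <;> linarith
  have h2 : (x + y) ^ q ≤ (2 * max x y) ^ q :=
    Real.rpow_le_rpow (by linarith) h1 hq
  have h3 : (2 * max x y) ^ q = 2 ^ q * (max x y) ^ q :=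
    Real.mul_rpow (by norm_num) (le_max_of_le_left hx)
  have h4 : (max x y) ^ q ≤ x ^ q + y ^ q := by
    rcases max_cases x y with ⟨h, _⟩ | ⟨h, _⟩ <;> rw [h]
    · nlinarith [Real.rpow_nonneg hy q]
    · nlinarith [Real.rpow_nonneg hx q]
  calc (x + y) ^ q ≤ 2 ^ q * (max x y) ^ q := by rw [← h3]; exact h2
    _ ≤ 2 ^ q * (x ^ q + y ^ q) := by
        have : (0:ℝ) ≤ (2:ℝ) ^ q := Real.rpow_nonneg (by norm_num) q
        nlinarith

/-- Jensen: the average is at most the `q`-power mean, over the cube. -/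
lemma avg_le_rpow_avg (m : ℕ) (g : (Fin m → Bool) → ℝ) (hg : ∀ ε, 0 ≤ g ε)
    {q : ℝ} (hq : 1 ≤ q) :
    (∑ ε : Fin m → Bool, g ε) / 2 ^ m
      ≤ ((∑ ε : Fin m → Bool, g ε ^ q) / 2 ^ m) ^ (1 / q) := by
  have hcard : (Fintype.card (Fin m → Bool) : ℝ) = 2 ^ m := by
    simp [Fintype.card_fun]
  have h := Real.arith_mean_le_rpow_mean Finset.univ (fun _ => ((2:ℝ) ^ m)⁻¹) g
    (fun _ _ => by positivity)
    (by
      rw [Finset.sum_const, nsmul_eq_mul, Finset.card_univ, hcard]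
      field_simp)
    (fun ε _ => hg ε) hq
  calc (∑ ε : Fin m → Bool, g ε) / 2 ^ m
      = ∑ ε : Fin m → Bool, ((2:ℝ) ^ m)⁻¹ * g ε := by
        rw [div_eq_mul_inv, mul_comm, ← Finset.mul_sum]
    _ ≤ (∑ ε : Fin m → Bool, ((2:ℝ) ^ m)⁻¹ * g ε ^ q) ^ (1 / q) := h
    _ = ((∑ ε : Fin m → Bool, g ε ^ q) / 2 ^ m) ^ (1 / q) := by
        congr 1
        rw [div_eq_mul_inv, mul_comm, ← Finset.mul_sum]

/-- The `m`-th type-`p` constant `a_{m,p}(X)`. -/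
noncomputable def typeConst (X : Type*) [NormedAddCommGroup X] [NormedSpace ℝ X]
    (m : ℕ) (p : ℝ) : ℝ :=
  sInf {a : ℝ | 0 ≤ a ∧ ∀ x : Fin m → X,
    (∑ ε : Fin m → Bool, ‖∑ j, (if ε j then (1 : ℝ) else -1) • x j‖) / 2 ^ m ≤
      a * (∑ j, ‖x j‖ ^ p) ^ (1 / p)}

section TypeConst

variable {X : Type*} [NormedAddCommGroup X] [NormedSpace ℝ X] {m : ℕ} {p : ℝ}

lemma le_rpow_sum {ι : Type*} [Fintype ι] (a : ι → ℝ) (ha : ∀ i, 0 ≤ a i)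
    (hp : 0 < p) (i : ι) : a i ≤ (∑ i, a i ^ p) ^ (1 / p) := by
  have h1 : a i ^ p ≤ ∑ i, a i ^ p :=
    Finset.single_le_sum (fun i _ => Real.rpow_nonneg (ha i) p) (Finset.mem_univ i)
  have h2 := Real.rpow_le_rpow (Real.rpow_nonneg (ha i) p) h1 (by positivity : (0:ℝ) ≤ 1/p)
  rwa [← Real.rpow_mul (ha i), mul_one_div, div_self hp.ne', Real.rpow_one] at h2

lemma typeConst_mem_nat (hp : 1 ≤ p) :
    ((m : ℝ)) ∈ {a : ℝ | 0 ≤ a ∧ ∀ x : Fin m → X,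
      (∑ ε : Fin m → Bool, ‖∑ j, (if ε j then (1 : ℝ) else -1) • x j‖) / 2 ^ m ≤
        a * (∑ j, ‖x j‖ ^ p) ^ (1 / p)} := by
  have hp0 : (0:ℝ) < p := lt_of_lt_of_le one_pos hp
  refine ⟨Nat.cast_nonneg m, fun x => ?_⟩
  set T : ℝ := (∑ j, ‖x j‖ ^ p) ^ (1 / p) with hT
  have hstep : ∀ ε : Fin m → Bool, ‖∑ j, (if ε j then (1 : ℝ) else -1) • x j‖
      ≤ (m : ℝ) * T := by
    intro ε
    calc ‖∑ j, (if ε j then (1 : ℝ) else -1) • x j‖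
        ≤ ∑ j, ‖(if ε j then (1 : ℝ) else -1) • x j‖ := norm_sum_le _ _
      _ = ∑ j : Fin m, ‖x j‖ := by
          refine Finset.sum_congr rfl fun j _ => ?_
          rcases Bool.eq_false_or_eq_true (ε j) with h | h <;> rw [h] <;>
            simp [norm_smul]
      _ ≤ ∑ _j : Fin m, T := by
          refine Finset.sum_le_sum fun j _ => ?_
          exact le_rpow_sum (fun j => ‖x j‖) (fun j => norm_nonneg _) hp0 j
      _ = (m : ℝ) * T := by
          rw [Finset.sum_const, nsmul_eq_mul, Finset.card_univ, Fintype.card_fin]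
  calc (∑ ε : Fin m → Bool, ‖∑ j, (if ε j then (1 : ℝ) else -1) • x j‖) / 2 ^ m
      ≤ (∑ _ε : Fin m → Bool, (m : ℝ) * T) / 2 ^ m := by
        gcongr with ε _
        exact hstep ε
    _ = (m : ℝ) * T := by
        rw [Finset.sum_const, nsmul_eq_mul, Finset.card_univ]
        have hcard : (Fintype.card (Fin m → Bool) : ℝ) = 2 ^ m := by
          simp [Fintype.card_fun]
        rw [hcard]
        field_simp

lemma typeConst_nonneg : 0 ≤ typeConst X m p :=
  Real.sInf_nonneg fun _ ha => ha.1

lemma typeConst_spec (hp : 1 ≤ p) (x : Fin m → X) :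
    (∑ ε : Fin m → Bool, ‖∑ j, (if ε j then (1 : ℝ) else -1) • x j‖) / 2 ^ m ≤
      typeConst X m p * (∑ j, ‖x j‖ ^ p) ^ (1 / p) := by
  have hp0 : (0:ℝ) < p := lt_of_lt_of_le one_pos hp
  set T : ℝ := (∑ j, ‖x j‖ ^ p) ^ (1 / p) with hT
  have hT0 : 0 ≤ T :=
    Real.rpow_nonneg (Finset.sum_nonneg fun j _ => Real.rpow_nonneg (norm_nonneg _) p) _
  rcases eq_or_lt_of_le hT0 with h0 | h0
  · -- T = 0 : all x j = 0
    have hxj : ∀ j, x j = 0 := by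
      intro j
      have := le_rpow_sum (fun j => ‖x j‖) (fun j => norm_nonneg _) hp0 j
      rw [← hT, ← h0] at this
      exact norm_le_zero_iff.1 this
    have hz : ∀ ε : Fin m → Bool, ‖∑ j, (if ε j then (1 : ℝ) else -1) • x j‖ = 0 := by
      intro ε
      have : ∀ j : Fin m, (if ε j then (1 : ℝ) else -1) • x j = 0 := by
        intro j; rw [hxj j, smul_zero]
      rw [Finset.sum_congr rfl fun j _ => this j]
      simp
    rw [Finset.sum_congr rfl fun ε _ => hz ε]
    simp [← h0]
  · -- T > 0
    rw [← div_le_iff₀ h0] at *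
    refine le_csInf ⟨(m : ℝ), typeConst_mem_nat hp⟩ fun a ha => ?_
    rw [div_le_iff₀ h0]
    exact ha.2 x

lemma typeConst_le {a : ℝ} (ha : 0 ≤ a)
    (h : ∀ x : Fin m → X,
      (∑ ε : Fin m → Bool, ‖∑ j, (if ε j then (1 : ℝ) else -1) • x j‖) / 2 ^ m ≤
        a * (∑ j, ‖x j‖ ^ p) ^ (1 / p)) :
    typeConst X m p ≤ a :=
  csInf_le ⟨0, fun _ hb => hb.1⟩ ⟨ha, h⟩

lemma one_le_typeConst [Nontrivial X] (hm : 1 ≤ m) (hp : 1 ≤ p) :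
    1 ≤ typeConst X m p := by
  have hp0 : (0:ℝ) < p := lt_of_lt_of_le one_pos hp
  obtain ⟨b, hb⟩ := exists_ne (0 : X)
  set u : X := ‖b‖⁻¹ • b with hu
  have hub : ‖u‖ = 1 := by
    rw [hu, norm_smul, norm_inv, norm_norm, inv_mul_cancel₀ (norm_ne_zero_iff.2 hb)]
  set j0 : Fin m := ⟨0, hm⟩ with hj0
  set x : Fin m → X := fun k => if k = j0 then u else 0 with hx
  refine le_csInf ⟨(m : ℝ), typeConst_mem_nat hp⟩ fun a ha => ?_
  have h := ha.2 x
  have hsum : ∀ ε : Fin m → Bool,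
      (∑ j, (if ε j then (1 : ℝ) else -1) • x j) = (if ε j0 then (1:ℝ) else -1) • u := by
    intro ε
    rw [Finset.sum_eq_single j0]
    · rw [hx]; simp
    · intro k _ hk
      rw [hx]; simp [hk]
    · intro hk
      exact absurd (Finset.mem_univ j0) hk
  have hnorm : ∀ ε : Fin m → Bool,
      ‖∑ j, (if ε j then (1 : ℝ) else -1) • x j‖ = 1 := by
    intro ε
    rw [hsum ε]
    rcases Bool.eq_false_or_eq_true (ε j0) with hb' | hb' <;> rw [hb'] <;>
      simp [norm_smul, hub]
  have hTsum : (∑ j, ‖x j‖ ^ p) = 1 := by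
    rw [Finset.sum_eq_single j0]
    · rw [hx]; simp [hub]
    · intro k _ hk
      rw [hx]; simp [hk, Real.zero_rpow hp0.ne']
    · intro hk
      exact absurd (Finset.mem_univ j0) hk
  rw [Finset.sum_congr rfl fun ε _ => hnorm ε, hTsum] at h
  have hcard : (Fintype.card (Fin m → Bool) : ℝ) = 2 ^ m := by
    simp [Fintype.card_fun]
  rw [Finset.sum_const, nsmul_eq_mul, Finset.card_univ, hcard, mul_one,
    Real.one_rpow, mul_one, div_self (by positivity : ((2:ℝ)^m) ≠ 0)] at h
  exact h

end TypeConst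

/-- Flipping one sign changes the signed sum's norm by at most `2 * ‖y j‖`. -/
lemma bounded_diff {X : Type*} [NormedAddCommGroup X] [NormedSpace ℝ X] {m : ℕ}
    (y : Fin m → X) (j : Fin m) (ε : Fin m → Bool) :
    |‖∑ k, (if Function.update ε j true k then (1 : ℝ) else -1) • y k‖
      - ‖∑ k, (if Function.update ε j false k then (1 : ℝ) else -1) • y k‖|
      ≤ 2 * ‖y j‖ := by
  have h1 := abs_norm_sub_norm_le
    (∑ k, (if Function.update ε j true k then (1 : ℝ) else -1) • y k)
    (∑ k, (if Function.update ε j false k then (1 : ℝ) else -1) • y k)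
  refine h1.trans ?_
  rw [← Finset.sum_sub_distrib]
  have h2 : ∀ k : Fin m,
      (if Function.update ε j true k then (1 : ℝ) else -1) • y k
        - (if Function.update ε j false k then (1 : ℝ) else -1) • y k
      = if k = j then (2 : ℝ) • y j else 0 := by
    intro k
    by_cases hk : k = j
    · subst hk
      rw [Function.update_self, Function.update_self]
      norm_num
      rw [two_smul]
    · rw [Function.update_of_ne hk, Function.update_of_ne hk, if_neg hk, sub_self]
  rw [Finset.sum_congr rfl fun k _ => h2 k, Finset.sum_ite_eq' Finset.univ j
    (fun _ => (2:ℝ) • y j)]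
  simp [norm_smul]

open scoped ENNReal
set_option maxHeartbeats 1000000 in
theorem stmt9 (p q : ℝ) (hp : 1 < p) (hp2 : p ≤ 2) (hpq : p ≤ q) (h2q : 2 ≤ q)
    [Fact (1 ≤ ENNReal.ofReal q)] :
    ∃ c : ℝ, 0 < c ∧
      ∀ (B : Type) [NormedAddCommGroup B] [NormedSpace ℝ B] [CompleteSpace B],
        ∀ m : ℕ, 1 ≤ m →
          typeConst (lp (fun _ : ℕ => B) (ENNReal.ofReal q)) m p ≤ c * typeConst B m p := by
  have hq1 : (1:ℝ) ≤ q := by linarith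
  have hq0 : (0:ℝ) < q := by linarith
  have hp0 : (0:ℝ) < p := by linarith
  have hp1 : (1:ℝ) ≤ p := hp.le
  set K : ℝ := 2 * Real.exp (1/8) * (q / Real.exp 1) ^ q with hK
  have hK0 : 0 ≤ K := by
    have : (0:ℝ) ≤ (q / Real.exp 1) ^ q := Real.rpow_nonneg (by positivity) q
    positivity
  set C1 : ℝ := 2 ^ q + 4 ^ q * K with hC1
  have h2q0 : (0:ℝ) < 2 ^ q := Real.rpow_pos_of_pos (by norm_num) q
  have h4q0 : (0:ℝ) ≤ 4 ^ q := Real.rpow_nonneg (by norm_num) q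
  have hC10 : 0 < C1 := by
    have : (0:ℝ) ≤ 4 ^ q * K := mul_nonneg h4q0 hK0
    rw [hC1]; linarith
  refine ⟨C1 ^ (1/q), Real.rpow_pos_of_pos hC10 _, ?_⟩
  intro B _ _ _ m hm
  have hc0 : 0 < C1 ^ (1/q) := Real.rpow_pos_of_pos hC10 _
  set Q : ℝ≥0∞ := ENNReal.ofReal q with hQ
  have hQt : Q.toReal = q := ENNReal.toReal_ofReal (by linarith)
  have hQt0 : 0 < Q.toReal := by rw [hQt]; linarith
  rcases subsingleton_or_nontrivial B with hB | hB
  · -- trivial case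
    haveI : Subsingleton (∀ _ : ℕ, B) := inferInstance
    haveI hss : Subsingleton (lp (fun _ : ℕ => B) Q) :=
      ⟨fun f g => lp.ext (funext fun n => Subsingleton.elim _ _)⟩
    have h0 : typeConst (lp (fun _ : ℕ => B) Q) m p ≤ 0 := by
      apply typeConst_le le_rfl
      intro x
      have hz : ∀ ε : Fin m → Bool,
          ‖∑ j, (if ε j then (1:ℝ) else -1) • x j‖ = 0 := by
        intro ε
        rw [Subsingleton.elim (∑ j, (if ε j then (1:ℝ) else -1) • x j) 0, norm_zero]
      rw [Finset.sum_congr rfl fun ε _ => hz ε, Finset.sum_const]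
      simp
    refine h0.trans ?_
    exact mul_nonneg hc0.le typeConst_nonneg
  · -- main case
    set a : ℝ := typeConst B m p with ha
    have ha1 : 1 ≤ a := one_le_typeConst hm hp1
    have ha0 : 0 ≤ a := by linarith
    apply typeConst_le (by positivity)
    intro x
    -- notation
    set u : ℕ → Fin m → ℝ := fun n j => ‖(x j : ∀ _ : ℕ, B) n‖ with hu
    have hu0 : ∀ n j, 0 ≤ u n j := fun n j => norm_nonneg _
    set g : ℕ → (Fin m → Bool) → ℝ :=
      fun n ε => ‖∑ j, (if ε j then (1:ℝ) else -1) • ((x j : ∀ _ : ℕ, B) n)‖ with hg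
    have hg0 : ∀ n ε, 0 ≤ g n ε := fun n ε => norm_nonneg _
    set t : ℕ → ℝ := fun n => (∑ j, u n j ^ p) ^ (1/p) with ht
    have ht0 : ∀ n, 0 ≤ t n := fun n =>
      Real.rpow_nonneg (Finset.sum_nonneg fun j _ => Real.rpow_nonneg (hu0 n j) p) _
    set T : ℝ := (∑ j, ‖x j‖ ^ p) ^ (1/p) with hT
    have hT0 : 0 ≤ T :=
      Real.rpow_nonneg (Finset.sum_nonneg fun j _ => Real.rpow_nonneg (norm_nonneg _) p) _
    set S : (Fin m → Bool) → lp (fun _ : ℕ => B) Q :=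
      fun ε => ∑ j, (if ε j then (1:ℝ) else -1) • x j with hS
    have hScoord : ∀ ε n, (S ε : ∀ _ : ℕ, B) n
        = ∑ j, (if ε j then (1:ℝ) else -1) • ((x j : ∀ _ : ℕ, B) n) := by
      intro ε n
      rw [hS]
      rw [lp.coeFn_sum]
      rw [Finset.sum_apply]
      refine Finset.sum_congr rfl fun j _ => ?_
      rw [lp.coeFn_smul, Pi.smul_apply]
    have hgS : ∀ ε n, ‖(S ε : ∀ _ : ℕ, B) n‖ = g n ε := by
      intro ε n
      rw [hScoord ε n, hg]
    -- summability of coordinates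
    have hSummS : ∀ ε : Fin m → Bool, Summable fun n => g n ε ^ q := by
      intro ε
      have h1 := (lp.memℓp (S ε)).summable hQt0
      rw [hQt] at h1
      refine h1.congr fun n => ?_
      rw [hgS ε n]
    -- step (2): f ε ^ q = ∑' n, g n ε ^ q
    have hfq : ∀ ε : Fin m → Bool, ‖S ε‖ ^ q = ∑' n, g n ε ^ q := by
      intro ε
      have h1 := lp.norm_rpow_eq_tsum hQt0 (S ε)
      rw [hQt] at h1
      rw [h1]
      exact tsum_congr fun n => by rw [hgS ε n]
    -- mixed norm machinery
    set r : ℝ := q / p with hr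
    have hr1 : 1 ≤ r := (one_le_div hp0).2 hpq
    have hr0 : 0 < r := by linarith
    set R : ℝ≥0∞ := ENNReal.ofReal r with hR
    have hRt : R.toReal = r := ENNReal.toReal_ofReal (by linarith)
    have hRt0 : 0 < R.toReal := by rw [hRt]; linarith
    haveI : Fact (1 ≤ R) := ⟨ENNReal.one_le_ofReal.2 hr1⟩
    have hpr : p * r = q := by rw [hr]; field_simp
    set w : Fin m → (ℕ → ℝ) := fun j n => u n j ^ p with hw
    have hwmem : ∀ j, Memℓp (w j) R := by
      intro j
      apply memℓp_gen
      rw [hRt]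
      have h1 := (lp.memℓp (x j)).summable hQt0
      rw [hQt] at h1
      refine h1.congr fun n => ?_
      show ‖(x j : ∀ _ : ℕ, B) n‖ ^ q = ‖w j n‖ ^ r
      have hwn : ‖w j n‖ = u n j ^ p := Real.norm_of_nonneg (Real.rpow_nonneg (hu0 n j) p)
      rw [hwn, ← Real.rpow_mul (hu0 n j), hpr]
    set W : lp (fun _ : ℕ => ℝ) R := ∑ j, (⟨w j, hwmem j⟩ : lp (fun _ : ℕ => ℝ) R) with hW
    have hWcoord : ∀ n, (W : ℕ → ℝ) n = ∑ j, u n j ^ p := by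
      intro n
      rw [hW, lp.coeFn_sum, Finset.sum_apply]
    have hWn0 : ∀ n, 0 ≤ (W : ℕ → ℝ) n := by
      intro n
      rw [hWcoord n]
      exact Finset.sum_nonneg fun j _ => Real.rpow_nonneg (hu0 n j) p
    have htW : ∀ n, t n ^ q = (W : ℕ → ℝ) n ^ r := by
      intro n
      rw [hWcoord n, ht]
      rw [← Real.rpow_mul (Finset.sum_nonneg fun j _ => Real.rpow_nonneg (hu0 n j) p)]
      congr 1
      rw [hr]; ring
    have hSummT : Summable fun n => t n ^ q := by
      have h1 := (lp.memℓp W).summable hRt0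
      rw [hRt] at h1
      refine Summable.congr (h1.congr fun n => ?_) fun n => (htW n).symm
      rw [Real.norm_of_nonneg (hWn0 n)]
    -- step (4): per-coordinate bound
    have hper : ∀ n, (∑ ε : Fin m → Bool, g n ε ^ q) / 2 ^ m ≤ C1 * a ^ q * t n ^ q := by
      intro n
      have hdiffs : ∀ (j : Fin m) (ε : Fin m → Bool),
          |g n (Function.update ε j true) - g n (Function.update ε j false)|
            ≤ 2 * u n j :=
        fun j ε => bounded_diff (fun j => (x j : ∀ _ : ℕ, B) n) j ε
      have hμa : (∑ ε : Fin m → Bool, g n ε) / 2 ^ m ≤ a * t n := by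
        have := typeConst_spec (X := B) hp1 (fun j => (x j : ∀ _ : ℕ, B) n)
        exact this
      set μ : ℝ := (∑ ε : Fin m → Bool, g n ε) / 2 ^ m with hμ
      have hμ0 : 0 ≤ μ := by
        rw [hμ]
        have : 0 ≤ ∑ ε : Fin m → Bool, g n ε :=
          Finset.sum_nonneg fun ε _ => hg0 n ε
        positivity
      have hRHS0 : 0 ≤ C1 * a ^ q * t n ^ q := by
        have h1 : (0:ℝ) ≤ a ^ q := Real.rpow_nonneg ha0 q
        have h2 : (0:ℝ) ≤ t n ^ q := Real.rpow_nonneg (ht0 n) q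
        positivity
      by_cases hz : ∑ j, u n j ^ 2 = 0
      · -- degenerate coordinate: all x j n = 0
        have hzero : ∀ j, u n j = 0 := by
          intro j
          have h1 : u n j ^ 2 ≤ ∑ j, u n j ^ 2 :=
            Finset.single_le_sum (f := fun j => u n j ^ 2)
              (fun j _ => sq_nonneg _) (Finset.mem_univ j)
          rw [hz] at h1
          nlinarith [hu0 n j]
        have hgz : ∀ ε : Fin m → Bool, g n ε = 0 := by
          intro ε
          have hj : ∀ j : Fin m, (if ε j then (1:ℝ) else -1) • ((x j : ∀ _ : ℕ, B) n) = 0 := by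
            intro j
            have hx0 : (x j : ∀ _ : ℕ, B) n = 0 := norm_eq_zero.1 (hzero j)
            rw [hx0, smul_zero]
          show ‖∑ j, (if ε j then (1:ℝ) else -1) • ((x j : ∀ _ : ℕ, B) n)‖ = 0
          rw [Finset.sum_congr rfl fun j _ => hj j]
          simp
        have : (∑ ε : Fin m → Bool, g n ε ^ q) = 0 := by
          rw [Finset.sum_congr rfl fun ε _ => by
            rw [hgz ε, Real.zero_rpow hq0.ne']]
          simp
        rw [this]
        have : (0:ℝ) / 2 ^ m = 0 := by simp
        rw [this]
        exact hRHS0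
      · -- nondegenerate
        have hz' : 0 < ∑ j, u n j ^ 2 :=
          lt_of_le_of_ne (Finset.sum_nonneg fun j _ => sq_nonneg _) (Ne.symm hz)
        set s : ℝ := 4 * ∑ j, u n j ^ 2 with hs
        have hs0 : 0 < s := by rw [hs]; linarith
        have hcs : ∑ j, (2 * u n j) ^ 2 ≤ s := by
          rw [hs]
          apply le_of_eq
          rw [Finset.mul_sum]
          exact Finset.sum_congr rfl fun j _ => by ring
        have hmom := moment_bound m (fun j => 2 * u n j) (g n) q s hq1 hs0 hcs hdiffs
        -- s ^ (q/2) ≤ 2^q * t n ^ q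
        have hsq : s ^ (q/2) ≤ 2 ^ q * t n ^ q := by
          have hσ : (∑ j, u n j ^ (2:ℝ)) ^ (1/(2:ℝ)) ≤ t n := by
            rw [ht]
            exact sum_rpow_anti (u n) (hu0 n) hp0 hp2
          have hconv : ∑ j, u n j ^ (2:ℝ) = ∑ j, u n j ^ 2 := by
            refine Finset.sum_congr rfl fun j _ => ?_
            rw [show (2:ℝ) = ((2:ℕ):ℝ) by norm_num, Real.rpow_natCast]
          have hσ2 : (∑ j, u n j ^ 2) ^ (q/2) ≤ t n ^ q := by
            have h1 : ((∑ j, u n j ^ (2:ℝ)) ^ (1/(2:ℝ))) ^ q ≤ t n ^ q :=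
              Real.rpow_le_rpow (Real.rpow_nonneg
                (Finset.sum_nonneg fun j _ => Real.rpow_nonneg (hu0 n j) _) _) hσ hq0.le
            rw [← Real.rpow_mul (Finset.sum_nonneg fun j _ =>
              Real.rpow_nonneg (hu0 n j) _)] at h1
            rw [show 1/(2:ℝ) * q = q/2 by ring, hconv] at h1
            exact h1
          have h4 : (4:ℝ) ^ (q/2) = 2 ^ q := by
            rw [show (4:ℝ) = (2:ℝ) ^ (2:ℕ) by norm_num, ← Real.rpow_natCast (2:ℝ) 2,
              ← Real.rpow_mul (by norm_num : (0:ℝ) ≤ 2)]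
            congr 1
            push_cast
            ring
          rw [hs, Real.mul_rpow (by norm_num) hz'.le, h4]
          exact mul_le_mul_of_nonneg_left hσ2 h2q0.le
        -- pointwise and average
        have hpoint : ∀ ε : Fin m → Bool,
            g n ε ^ q ≤ 2 ^ q * μ ^ q + 2 ^ q * |g n ε - μ| ^ q := by
          intro ε
          have h1 : g n ε ≤ μ + |g n ε - μ| := by
            have := le_abs_self (g n ε - μ)
            linarith
          have h2 : g n ε ^ q ≤ (μ + |g n ε - μ|) ^ q :=
            Real.rpow_le_rpow (hg0 n ε) h1 hq0.le
          have h3 := add_rpow_le μ (|g n ε - μ|) q hμ0 (abs_nonneg _) hq0.le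
          calc g n ε ^ q ≤ (μ + |g n ε - μ|) ^ q := h2
            _ ≤ 2 ^ q * (μ ^ q + |g n ε - μ| ^ q) := h3
            _ = 2 ^ q * μ ^ q + 2 ^ q * |g n ε - μ| ^ q := by ring
        have havg : (∑ ε : Fin m → Bool, g n ε ^ q) / 2 ^ m
            ≤ 2 ^ q * μ ^ q + 2 ^ q * ((∑ ε : Fin m → Bool, |g n ε - μ| ^ q) / 2 ^ m) := by
          have h2m : (0:ℝ) < 2 ^ m := by positivity
          rw [div_le_iff₀ h2m]
          calc ∑ ε : Fin m → Bool, g n ε ^ q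
              ≤ ∑ ε : Fin m → Bool, (2 ^ q * μ ^ q + 2 ^ q * |g n ε - μ| ^ q) :=
                Finset.sum_le_sum fun ε _ => hpoint ε
            _ = 2 ^ m * (2 ^ q * μ ^ q) + 2 ^ q * ∑ ε : Fin m → Bool, |g n ε - μ| ^ q := by
                rw [Finset.sum_add_distrib, Finset.sum_const, Finset.card_univ,
                  ← Finset.mul_sum]
                have hcard : (Fintype.card (Fin m → Bool) : ℝ) = 2 ^ m := by
                  simp [Fintype.card_fun]
                rw [nsmul_eq_mul, hcard]
            _ = (2 ^ q * μ ^ q + 2 ^ q * ((∑ ε : Fin m → Bool, |g n ε - μ| ^ q) / 2 ^ m))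
                  * 2 ^ m := by
                field_simp
        have hμq : μ ^ q ≤ a ^ q * t n ^ q := by
          have h1 : μ ^ q ≤ (a * t n) ^ q := Real.rpow_le_rpow hμ0 hμa hq0.le
          rw [Real.mul_rpow ha0 (ht0 n)] at h1
          exact h1
        have haq1 : 1 ≤ a ^ q := Real.one_le_rpow ha1 hq0.le
        have htq0 : 0 ≤ t n ^ q := Real.rpow_nonneg (ht0 n) q
        calc (∑ ε : Fin m → Bool, g n ε ^ q) / 2 ^ m
            ≤ 2 ^ q * μ ^ q + 2 ^ q * ((∑ ε : Fin m → Bool, |g n ε - μ| ^ q) / 2 ^ m) :=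
              havg
          _ ≤ 2 ^ q * (a ^ q * t n ^ q) + 2 ^ q * (K * s ^ (q/2)) :=
              add_le_add (mul_le_mul_of_nonneg_left hμq h2q0.le)
                (mul_le_mul_of_nonneg_left hmom h2q0.le)
          _ ≤ 2 ^ q * (a ^ q * t n ^ q) + 2 ^ q * (K * (2 ^ q * t n ^ q)) :=
              add_le_add_right (mul_le_mul_of_nonneg_left
                (mul_le_mul_of_nonneg_left hsq hK0) h2q0.le) _
          _ = 2 ^ q * (a ^ q * t n ^ q) + 4 ^ q * K * t n ^ q := by
              have h24 : (2:ℝ) ^ q * 2 ^ q = 4 ^ q := by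
                rw [← Real.mul_rpow (by norm_num) (by norm_num)]
                norm_num
              rw [show (2:ℝ) ^ q * (K * (2 ^ q * t n ^ q))
                  = (2 ^ q * 2 ^ q) * K * t n ^ q from by ring, h24]
          _ ≤ 2 ^ q * (a ^ q * t n ^ q) + 4 ^ q * K * (a ^ q * t n ^ q) :=
              add_le_add_right (mul_le_mul_of_nonneg_left
                (le_mul_of_one_le_left htq0 haq1) (mul_nonneg h4q0 hK0)) _
          _ = C1 * a ^ q * t n ^ q := by rw [hC1]; ring
    -- step (3) + (5): sum over n
    have hSummL : Summable fun n => (∑ ε : Fin m → Bool, g n ε ^ q) / 2 ^ m := by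
      apply Summable.div_const
      exact summable_sum fun ε _ => hSummS ε
    have hSummR : Summable fun n => C1 * a ^ q * t n ^ q := hSummT.mul_left _
    have hstep3 : (∑ ε : Fin m → Bool, ‖S ε‖ ^ q) / 2 ^ m
        = ∑' n, (∑ ε : Fin m → Bool, g n ε ^ q) / 2 ^ m := by
      rw [Finset.sum_congr rfl fun ε _ => hfq ε,
        ← Summable.tsum_finsetSum fun ε _ => hSummS ε, tsum_div_const]
    have hstep5 : ∑' n, (∑ ε : Fin m → Bool, g n ε ^ q) / 2 ^ m
        ≤ C1 * a ^ q * ∑' n, t n ^ q := by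
      rw [← tsum_mul_left]
      exact Summable.tsum_le_tsum hper hSummL hSummR
    -- step (6): ∑' t^q ≤ T^q
    have hstep6 : ∑' n, t n ^ q ≤ T ^ q := by
      have h1 : ∑' n, t n ^ q = ‖W‖ ^ r := by
        have h2 := lp.norm_rpow_eq_tsum hRt0 W
        rw [hRt] at h2
        rw [h2]
        refine tsum_congr fun n => ?_
        rw [htW n, Real.norm_of_nonneg (hWn0 n)]
      have hnormw : ∀ j, ‖(⟨w j, hwmem j⟩ : lp (fun _ : ℕ => ℝ) R)‖ = ‖x j‖ ^ p := by
        intro j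
        have h2 := lp.norm_eq_tsum_rpow hRt0 (⟨w j, hwmem j⟩ : lp (fun _ : ℕ => ℝ) R)
        rw [hRt] at h2
        have h3 : ∑' n, ‖w j n‖ ^ r = ‖x j‖ ^ q := by
          have h4 := lp.norm_rpow_eq_tsum hQt0 (x j)
          rw [hQt] at h4
          rw [h4]
          refine tsum_congr fun n => ?_
          show ‖w j n‖ ^ r = ‖(x j : ∀ _ : ℕ, B) n‖ ^ q
          have hwn : ‖w j n‖ = u n j ^ p := Real.norm_of_nonneg (Real.rpow_nonneg (hu0 n j) p)
          rw [hwn, ← Real.rpow_mul (hu0 n j), hpr]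
        rw [h2, h3, ← Real.rpow_mul (norm_nonneg _)]
        congr 1
        rw [hr]
        field_simp
      have hWle : ‖W‖ ≤ ∑ j, ‖x j‖ ^ p := by
        rw [hW]
        refine (norm_sum_le _ _).trans ?_
        apply le_of_eq
        exact Finset.sum_congr rfl fun j _ => hnormw j
      have hTp : (∑ j, ‖x j‖ ^ p) = T ^ p := by
        rw [hT, ← Real.rpow_mul
          (Finset.sum_nonneg fun j _ => Real.rpow_nonneg (norm_nonneg _) p),
          one_div_mul_cancel hp0.ne', Real.rpow_one]
      rw [h1]
      calc ‖W‖ ^ r ≤ (∑ j, ‖x j‖ ^ p) ^ r :=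
            Real.rpow_le_rpow (norm_nonneg _) hWle hr0.le
        _ = (T ^ p) ^ r := by rw [hTp]
        _ = T ^ q := by rw [← Real.rpow_mul hT0, hpr]
    -- final combination
    calc (∑ ε : Fin m → Bool, ‖∑ j, (if ε j then (1:ℝ) else -1) • x j‖) / 2 ^ m
        = (∑ ε : Fin m → Bool, ‖S ε‖) / 2 ^ m := by rw [hS]
      _ ≤ ((∑ ε : Fin m → Bool, ‖S ε‖ ^ q) / 2 ^ m) ^ (1/q) :=
          avg_le_rpow_avg m (fun ε => ‖S ε‖) (fun ε => norm_nonneg _) hq1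
      _ ≤ (C1 * a ^ q * T ^ q) ^ (1/q) := by
          apply Real.rpow_le_rpow _ _ (by positivity)
          · rw [hstep3]
            exact tsum_nonneg fun n => by positivity
          · rw [hstep3]
            refine hstep5.trans ?_
            have h1 : (0:ℝ) ≤ C1 * a ^ q := by
              have : (0:ℝ) ≤ a ^ q := Real.rpow_nonneg ha0 q
              positivity
            exact mul_le_mul_of_nonneg_left hstep6 h1
      _ = C1 ^ (1/q) * a * T := by
          rw [Real.mul_rpow (by positivity) (Real.rpow_nonneg hT0 q),
            Real.mul_rpow hC10.le (Real.rpow_nonneg ha0 q),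
            ← Real.rpow_mul ha0, ← Real.rpow_mul hT0,
            mul_one_div, div_self hq0.ne', Real.rpow_one, Real.rpow_one]
      _ = C1 ^ (1/q) * a * (∑ j, ‖x j‖ ^ p) ^ (1/p) := by rw [hT]
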